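/- arXiv:2307.04924 — 2 statements merged into one kernel-verified Lean document; each statement's English description precedes it below -/
import Mathlib

section
/- Let N1 and N2 be independent Poisson random variables with means μ1 and μ2 respectively, with μ1 < μ2. Then P(N1 ≥ N2) ≤ exp(-(√μ1 - √μ2)²). -/
/-- The Poisson probability mass function with rate `μ`. -/
noncomputable def poiPMF (μ : ℝ) (k : ℕ) : ℝ := Real.exp (-μ) * μ ^ k / (Nat.factorial k)

/-!
Chernoff's method with the exponential moments of both variables: for every `θ ≥ 1`,
`1{N₂ ≤ N₁} ≤ θ ^ N₁ * θ⁻¹ ^ N₂`, and by independence the expectation of the right-hand side is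
`E[θ ^ N₁] E[θ⁻¹ ^ N₂] = exp (μ₁ (θ - 1) + μ₂ (θ⁻¹ - 1))`. The optimal choice `θ = √(μ₂ / μ₁)`
makes the exponent `-(√μ₁ - √μ₂)²`.
-/

theorem poiPMF_nonneg {μ : ℝ} (hμ : 0 ≤ μ) (k : ℕ) : 0 ≤ poiPMF μ k := by
  unfold poiPMF
  positivity

theorem hasSum_poiPMF_mul_pow (μ c : ℝ) :
    HasSum (fun n : ℕ => poiPMF μ n * c ^ n) (Real.exp (μ * (c - 1))) := by
  have hterm : ∀ n : ℕ, poiPMF μ n * c ^ n = Real.exp (-μ) * ((μ * c) ^ n / n.factorial) := by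
    intro n
    simp only [poiPMF, mul_pow]
    ring
  have hexp : Real.exp (μ * (c - 1)) = Real.exp (-μ) * Real.exp (μ * c) := by
    rw [← Real.exp_add]
    ring_nf
  rw [funext hterm, hexp, Real.exp_eq_exp_ℝ]
  exact (NormedSpace.expSeries_div_hasSum_exp (μ * c)).mul_left _

theorem one_le_pow_mul_inv_pow {θ : ℝ} (hθ : 1 ≤ θ) {m n : ℕ} (hmn : m ≤ n) :
    1 ≤ θ ^ n * θ⁻¹ ^ m := by
  rw [inv_pow, ← div_eq_mul_inv, one_le_div (pow_pos (zero_lt_one.trans_le hθ) m)]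
  exact pow_le_pow_right₀ hθ hmn

theorem tsum_poiPMF_mul_poiPMF_le_exp {μ₁ μ₂ θ : ℝ} (h₁ : 0 ≤ μ₁) (h₂ : 0 ≤ μ₂) (hθ : 1 ≤ θ) :
    (∑' p : ℕ × ℕ, if p.2 ≤ p.1 then poiPMF μ₁ p.1 * poiPMF μ₂ p.2 else 0)
      ≤ Real.exp (μ₁ * (θ - 1) + μ₂ * (θ⁻¹ - 1)) := by
  set f : ℕ → ℝ := fun n => poiPMF μ₁ n * θ ^ n
  set g : ℕ → ℝ := fun m => poiPMF μ₂ m * θ⁻¹ ^ m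
  have hθ₀ : 0 ≤ θ := zero_le_one.trans hθ
  have hf₀ : ∀ n, 0 ≤ f n := fun n => mul_nonneg (poiPMF_nonneg h₁ n) (pow_nonneg hθ₀ n)
  have hg₀ : ∀ m, 0 ≤ g m := fun m =>
    mul_nonneg (poiPMF_nonneg h₂ m) (pow_nonneg (inv_nonneg.mpr hθ₀) m)
  have hf := hasSum_poiPMF_mul_pow μ₁ θ
  have hg := hasSum_poiPMF_mul_pow μ₂ θ⁻¹
  have hfg : HasSum (fun p : ℕ × ℕ => f p.1 * g p.2)
      (Real.exp (μ₁ * (θ - 1)) * Real.exp (μ₂ * (θ⁻¹ - 1))) :=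
    hf.mul hg (hf.summable.mul_of_nonneg hg.summable hf₀ hg₀)
  rw [Real.exp_add]
  have hbound : ∀ p : ℕ × ℕ,
      (if p.2 ≤ p.1 then poiPMF μ₁ p.1 * poiPMF μ₂ p.2 else 0) ≤ f p.1 * g p.2 := by
    rintro ⟨n, m⟩
    split_ifs with hmn
    · calc poiPMF μ₁ n * poiPMF μ₂ m
          ≤ poiPMF μ₁ n * poiPMF μ₂ m * (θ ^ n * θ⁻¹ ^ m) :=
            le_mul_of_one_le_right (mul_nonneg (poiPMF_nonneg h₁ n) (poiPMF_nonneg h₂ m))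
              (one_le_pow_mul_inv_pow hθ hmn)
        _ = f n * g m := by ring
    · exact mul_nonneg (hf₀ n) (hg₀ m)
  have hnonneg : ∀ p : ℕ × ℕ, 0 ≤ if p.2 ≤ p.1 then poiPMF μ₁ p.1 * poiPMF μ₂ p.2 else 0 :=
    fun p => by
      split_ifs
      exacts [mul_nonneg (poiPMF_nonneg h₁ _) (poiPMF_nonneg h₂ _), le_rfl]
  exact hasSum_le hbound (hfg.summable.of_nonneg_of_le hnonneg hbound).hasSum hfg

theorem sq_mul_div_sub_one_add_sq_mul_inv_sub_one {a b : ℝ} (ha : a ≠ 0) (hb : b ≠ 0) :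
    a ^ 2 * (b / a - 1) + b ^ 2 * ((b / a)⁻¹ - 1) = -(a - b) ^ 2 := by
  field_simp
  ring

theorem poisson_ge_chernoff_general (μ₁ μ₂ : ℝ) (h₁ : 0 < μ₁) (hlt : μ₁ < μ₂) :
    (∑' p : ℕ × ℕ, if p.2 ≤ p.1 then poiPMF μ₁ p.1 * poiPMF μ₂ p.2 else 0)
      ≤ Real.exp (-(Real.sqrt μ₁ - Real.sqrt μ₂) ^ 2) := by
  have h₂ : 0 < μ₂ := h₁.trans hlt
  have ha : 0 < Real.sqrt μ₁ := Real.sqrt_pos.mpr h₁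
  have hb : 0 < Real.sqrt μ₂ := Real.sqrt_pos.mpr h₂
  have hθ : 1 ≤ Real.sqrt μ₂ / Real.sqrt μ₁ :=
    (one_le_div ha).mpr (Real.sqrt_le_sqrt hlt.le)
  have hexponent := sq_mul_div_sub_one_add_sq_mul_inv_sub_one ha.ne' hb.ne'
  rw [Real.sq_sqrt h₁.le, Real.sq_sqrt h₂.le] at hexponent
  rw [← hexponent]
  exact tsum_poiPMF_mul_poiPMF_le_exp h₁.le h₂.le hθ

/-- For independent `N₁ ~ Poisson μ₁`, `N₂ ~ Poisson μ₂` with `μ₁ < μ₂`,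
`P(N₁ ≥ N₂) ≤ exp (-(√μ₁ - √μ₂)²)`. -/
theorem poisson_ge_chernoff (μ₁ μ₂ : ℝ) (h₁ : 0 < μ₁) (h₂ : 0 < μ₂) (hlt : μ₁ < μ₂) :
    (∑' p : ℕ × ℕ, if p.2 ≤ p.1 then poiPMF μ₁ p.1 * poiPMF μ₂ p.2 else 0)
      ≤ Real.exp (-(Real.sqrt μ₁ - Real.sqrt μ₂) ^ 2) :=
  poisson_ge_chernoff_general μ₁ μ₂ h₁ hlt
end

section
/- If the transient distribution φ(t) = η·s(t − τ) + φ_bkg on [0, T] with s a symmetric unimodal pulse centered at 0, η > 0, φ_bkg ≥ 0, and signal peak located at τ < T/2, then the median of φ lies in the closed interval [τ, T/2]; moreover the median is nonincreasing in η and converges to T/2 as η → 0. -/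
/-!
Write `F u = ∫ x in 0..u, s x`. Since `F` is odd and the shifted pulse carries all of its mass
inside `[0, T]`, the median condition `∫₀^m φ = ∫_m^T φ` reduces to `η * F (m - τ) = c * (T/2 - m)`.
`F` is monotone, bounded by `F τ`, and has the sign of its argument (unimodality keeps `s` positive
near `0`). Comparing signs of the two sides puts `m` in `[τ, T/2]`; comparing the equations for two
values of `η` gives monotonicity; and `c * (T/2 - m) ≤ η * F τ` gives `m → T/2` as `η → 0`.
-/

open MeasureTheory intervalIntegral

section MedianEquation

variable {F : ℝ → ℝ} {T τ c η m : ℝ}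

theorem le_of_median_eq (hneg : ∀ u < 0, F u < 0) (hc : 0 ≤ c) (hτT : τ < T / 2)
    (hη : 0 < η) (h : η * F (m - τ) = c * (T / 2 - m)) : τ ≤ m := by
  by_contra! hm
  have : η * F (m - τ) < 0 := mul_neg_of_pos_of_neg hη (hneg _ (by linarith))
  nlinarith

theorem le_half_of_median_eq (hpos : ∀ u, 0 < u → 0 < F u) (hc : 0 ≤ c) (hτT : τ < T / 2)
    (hη : 0 < η) (h : η * F (m - τ) = c * (T / 2 - m)) : m ≤ T / 2 := by
  by_contra! hm
  have : 0 < η * F (m - τ) := mul_pos hη (hpos _ (by linarith))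
  nlinarith

theorem median_antitone {η₁ η₂ m₁ m₂ : ℝ} (hF : Monotone F) (hpos : ∀ u, 0 < u → 0 < F u)
    (hneg : ∀ u < 0, F u < 0) (hc : 0 ≤ c) (hτT : τ < T / 2) (hη₁ : 0 < η₁) (hη : η₁ ≤ η₂)
    (h₁ : η₁ * F (m₁ - τ) = c * (T / 2 - m₁)) (h₂ : η₂ * F (m₂ - τ) = c * (T / 2 - m₂)) :
    m₂ ≤ m₁ := by
  by_contra! hm
  have hτ := le_of_median_eq hneg hc hτT hη₁ h₁
  have hF₂ : 0 < F (m₂ - τ) := hpos _ (by linarith)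
  have hF₁₂ : F (m₁ - τ) ≤ F (m₂ - τ) := hF (by linarith)
  have hc₂ : 0 < c * (T / 2 - m₂) := h₂ ▸ mul_pos (hη₁.trans_le hη) hF₂
  have hc' : 0 < c := hc.lt_of_ne (by rintro rfl; simp at hc₂)
  have hle : c * (T / 2 - m₁) ≤ c * (T / 2 - m₂) :=
    calc c * (T / 2 - m₁) = η₁ * F (m₁ - τ) := h₁.symm
      _ ≤ η₁ * F (m₂ - τ) := mul_le_mul_of_nonneg_left hF₁₂ hη₁.le
      _ ≤ η₂ * F (m₂ - τ) := mul_le_mul_of_nonneg_right hη hF₂.le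
      _ = c * (T / 2 - m₂) := h₂
  linarith [mul_lt_mul_of_pos_left hm hc']

theorem exists_median_near_half {A : ℝ} (hpos : ∀ u, 0 < u → 0 < F u) (hbound : ∀ u, F u ≤ A)
    (hc : 0 < c) (hτT : τ < T / 2) {ε : ℝ} (hε : 0 < ε) :
    ∃ η₀ > 0, ∀ η, 0 < η → η < η₀ → ∀ m, η * F (m - τ) = c * (T / 2 - m) →
      |m - T / 2| < ε := by
  have hA : 0 < A := (hpos 1 one_pos).trans_le (hbound 1)
  refine ⟨c * ε / A, by positivity, fun η hη hηη₀ m h => ?_⟩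
  have hm := le_half_of_median_eq hpos hc.le hτT hη h
  have hcm : c * (T / 2 - m) < c * ε :=
    calc c * (T / 2 - m) = η * F (m - τ) := h.symm
      _ ≤ η * A := mul_le_mul_of_nonneg_left (hbound _) hη.le
      _ < c * ε := (lt_div_iff₀ hA).mp hηη₀
  rw [abs_sub_comm, abs_of_nonneg (by linarith)]
  exact lt_of_mul_lt_mul_left hcm hc.le

end MedianEquation

section Pulse

variable {s : ℝ → ℝ}

theorem integral_comp_sub_mul_add_const (hs : Integrable s) (η τ c a b : ℝ) :
    ∫ x in a..b, (η * s (x - τ) + c) =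
      η * ((∫ x in (0 : ℝ)..(b - τ), s x) - ∫ x in (0 : ℝ)..(a - τ), s x) + c * (b - a) := by
  have hsτ : IntervalIntegrable (fun x => η * s (x - τ)) volume a b :=
    (hs.comp_sub_right τ).intervalIntegrable.const_mul η
  rw [integral_add hsτ intervalIntegrable_const, intervalIntegral.integral_const_mul,
    integral_comp_sub_right, integral_interval_sub_left hs.intervalIntegrable hs.intervalIntegrable,
    intervalIntegral.integral_const, smul_eq_mul, mul_comm (b - a)]

theorem median_condition_iff (hs : Integrable s) {T τ c η m : ℝ}
    (hsum : (∫ x in (0 : ℝ)..(T - τ), s x) + ∫ x in (0 : ℝ)..(-τ), s x = 0) :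
    (∫ x in (0 : ℝ)..m, (η * s (x - τ) + c)) = ∫ x in m..T, (η * s (x - τ) + c) ↔
      η * ∫ x in (0 : ℝ)..(m - τ), s x = c * (T / 2 - m) := by
  rw [integral_comp_sub_mul_add_const hs, integral_comp_sub_mul_add_const hs, zero_sub]
  constructor <;> intro h
  · linear_combination h / 2 + η / 2 * hsum
  · linear_combination 2 * h - η * hsum

theorem integral_zero_neg_of_even (hsym : ∀ x, s (-x) = s x) (u : ℝ) :
    ∫ x in (0 : ℝ)..(-u), s x = -∫ x in (0 : ℝ)..u, s x := by
  have h := integral_comp_neg (a := 0) (b := u) s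
  simp only [hsym, neg_zero] at h
  rw [integral_symm, ← h]

theorem monotone_integral_zero (hsnn : 0 ≤ s) (hs : Integrable s) :
    Monotone fun u => ∫ x in (0 : ℝ)..u, s x := fun a b hab => by
  dsimp only
  rw [← integral_add_adjacent_intervals hs.intervalIntegrable (hs.intervalIntegrable (b := b))]
  exact le_add_of_nonneg_right (integral_nonneg hab fun x _ => hsnn x)

theorem integral_zero_eq_of_le {τ u : ℝ} (hsupp : ∀ x, τ < |x| → s x = 0) (hs : Integrable s)
    (hu : τ ≤ u) : ∫ x in (0 : ℝ)..u, s x = ∫ x in (0 : ℝ)..τ, s x := by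
  rw [← integral_add_adjacent_intervals hs.intervalIntegrable (hs.intervalIntegrable (b := u)),
    integral_of_le hu, setIntegral_eq_zero_of_forall_eq_zero
      fun x hx => hsupp x (hx.1.trans_le (le_abs_self x)), add_zero]

theorem integral_zero_le_of_support {τ : ℝ} (hsnn : 0 ≤ s) (hs : Integrable s)
    (hsupp : ∀ x, τ < |x| → s x = 0) (u : ℝ) :
    ∫ x in (0 : ℝ)..u, s x ≤ ∫ x in (0 : ℝ)..τ, s x := by
  rcases le_total u τ with h | h
  · exact monotone_integral_zero hsnn hs h
  · exact (integral_zero_eq_of_le hsupp hs h).le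

theorem exists_pos_of_even_of_integral_pos (hsnn : 0 ≤ s) (hsym : ∀ x, s (-x) = s x)
    (hmass : 0 < ∫ x, s x) : ∃ p > 0, 0 < s p := by
  by_contra! h
  have hzero : ∀ x ≠ 0, s x = 0 := fun x hx => by
    rcases hx.lt_or_gt with hx | hx
    · rw [← hsym]
      exact le_antisymm (h _ (neg_pos.2 hx)) (hsnn _)
    · exact le_antisymm (h x hx) (hsnn x)
  have hae : s =ᵐ[volume] 0 :=
    Filter.mem_of_superset (compl_mem_ae_iff.2 (measure_singleton 0)) hzero
  simp [integral_congr_ae hae] at hmass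

theorem integral_zero_pos (hsnn : 0 ≤ s) (hanti : AntitoneOn s (Set.Ici 0)) (hs : Integrable s)
    (hp : ∃ p > 0, 0 < s p) {u : ℝ} (hu : 0 < u) : 0 < ∫ x in (0 : ℝ)..u, s x := by
  obtain ⟨p, hp, hsp⟩ := hp
  calc 0 < ∫ x in (0 : ℝ)..min u p, s x :=
        intervalIntegral_pos_of_pos_on hs.intervalIntegrable
          (fun x hx => hsp.trans_le (hanti (Set.mem_Ici.2 hx.1.le) (Set.mem_Ici.2 hp.le)
            (hx.2.le.trans (min_le_right u p))))
          (lt_min hu hp)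
    _ ≤ ∫ x in (0 : ℝ)..u, s x := monotone_integral_zero hsnn hs (min_le_left u p)

theorem integral_zero_neg (hsnn : 0 ≤ s) (hsym : ∀ x, s (-x) = s x)
    (hanti : AntitoneOn s (Set.Ici 0)) (hs : Integrable s) (hp : ∃ p > 0, 0 < s p) {u : ℝ}
    (hu : u < 0) : ∫ x in (0 : ℝ)..u, s x < 0 := by
  simpa [integral_zero_neg_of_even hsym] using integral_zero_pos hsnn hanti hs hp (neg_pos.2 hu)

end Pulse

theorem median_bias_ambient_light_general (T τ c : ℝ) (s : ℝ → ℝ)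
    (hτT : τ < T / 2) (hc : 0 ≤ c)
    (hsnn : ∀ x, 0 ≤ s x)
    (hsint : Integrable s)
    (hsym : ∀ x, s (-x) = s x)
    (hmono : ∀ a b : ℝ, 0 ≤ a → a ≤ b → s b ≤ s a)
    (hsupp : ∀ x : ℝ, τ < |x| → s x = 0)
    (hmass : 0 < ∫ x, s x) :
    (∀ η : ℝ, 0 < η → ∀ m ∈ Set.Icc (0 : ℝ) T,
      (∫ x in (0 : ℝ)..m, (η * s (x - τ) + c)) = (∫ x in m..T, (η * s (x - τ) + c)) →
      τ ≤ m ∧ m ≤ T / 2)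
    ∧ (∀ η₁ η₂ m₁ m₂ : ℝ, 0 < η₁ → η₁ ≤ η₂ →
        m₁ ∈ Set.Icc (0 : ℝ) T → m₂ ∈ Set.Icc (0 : ℝ) T →
        (∫ x in (0 : ℝ)..m₁, (η₁ * s (x - τ) + c)) = (∫ x in m₁..T, (η₁ * s (x - τ) + c)) →
        (∫ x in (0 : ℝ)..m₂, (η₂ * s (x - τ) + c)) = (∫ x in m₂..T, (η₂ * s (x - τ) + c)) →
        m₂ ≤ m₁)
    ∧ (0 < c → ∀ ε : ℝ, 0 < ε → ∃ η₀ > (0 : ℝ), ∀ η : ℝ, 0 < η → η < η₀ →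
        ∀ m ∈ Set.Icc (0 : ℝ) T,
        (∫ x in (0 : ℝ)..m, (η * s (x - τ) + c)) = (∫ x in m..T, (η * s (x - τ) + c)) →
        |m - T / 2| < ε) := by
  have hanti : AntitoneOn s (Set.Ici 0) := fun a ha b _ hab => hmono a b ha hab
  have hp := exists_pos_of_even_of_integral_pos hsnn hsym hmass
  have hpos : ∀ u, 0 < u → 0 < ∫ x in (0 : ℝ)..u, s x :=
    fun _ => integral_zero_pos hsnn hanti hsint hp
  have hneg : ∀ u < 0, ∫ x in (0 : ℝ)..u, s x < 0 :=
    fun _ => integral_zero_neg hsnn hsym hanti hsint hp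
  have hmed : ∀ η m, (∫ x in (0 : ℝ)..m, (η * s (x - τ) + c)) = ∫ x in m..T, (η * s (x - τ) + c) →
      η * ∫ x in (0 : ℝ)..(m - τ), s x = c * (T / 2 - m) := fun η m =>
    (median_condition_iff hsint (by
      rw [integral_zero_eq_of_le hsupp hsint (by linarith), integral_zero_neg_of_even hsym,
        add_neg_cancel])).1
  refine ⟨fun η hη m _ h => ⟨le_of_median_eq hneg hc hτT hη (hmed η m h),
      le_half_of_median_eq hpos hc hτT hη (hmed η m h)⟩,
    fun η₁ η₂ m₁ m₂ hη₁ hη _ _ h₁ h₂ => median_antitone (monotone_integral_zero hsnn hsint)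
      hpos hneg hc hτT hη₁ hη (hmed η₁ m₁ h₁) (hmed η₂ m₂ h₂),
    fun hc ε hε => ?_⟩
  obtain ⟨η₀, hη₀, hnear⟩ :=
    exists_median_near_half hpos (integral_zero_le_of_support hsnn hsint hsupp) hc hτT hε
  exact ⟨η₀, hη₀, fun η hη hηη₀ m _ h => hnear η hη hηη₀ m (hmed η m h)⟩

/-- For the transient distribution `φ(t) = η · s(t - τ) + c` on `[0, T]`, where `s` is a
symmetric unimodal integrable pulse centered at `0` (so that the shifted pulse has median
`τ`), `η > 0`, constant background `c ≥ 0`, and peak location `τ < T/2`: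
(i) every median `m` of `φ` (a point with `∫₀^m φ = ∫_m^T φ`) lies in `[τ, T/2]`;
(ii) the median is nonincreasing in `η`;
(iii) (for positive background) the median converges to `T/2` as `η → 0`. -/
theorem median_bias_ambient_light (T τ c : ℝ) (s : ℝ → ℝ)
    (hT : 0 < T) (hτ0 : 0 ≤ τ) (hτT : τ < T / 2) (hc : 0 ≤ c)
    (hsnn : ∀ x, 0 ≤ s x)
    (hsint : Integrable s)
    (hsym : ∀ x, s (-x) = s x)
    (hmono : ∀ a b : ℝ, 0 ≤ a → a ≤ b → s b ≤ s a)
    (hsupp : ∀ x : ℝ, τ < |x| → s x = 0)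
    (hmass : 0 < ∫ x, s x) :
    (∀ η : ℝ, 0 < η → ∀ m ∈ Set.Icc (0 : ℝ) T,
      (∫ x in (0 : ℝ)..m, (η * s (x - τ) + c)) = (∫ x in m..T, (η * s (x - τ) + c)) →
      τ ≤ m ∧ m ≤ T / 2)
    ∧ (∀ η₁ η₂ m₁ m₂ : ℝ, 0 < η₁ → η₁ ≤ η₂ →
        m₁ ∈ Set.Icc (0 : ℝ) T → m₂ ∈ Set.Icc (0 : ℝ) T →
        (∫ x in (0 : ℝ)..m₁, (η₁ * s (x - τ) + c)) = (∫ x in m₁..T, (η₁ * s (x - τ) + c)) →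
        (∫ x in (0 : ℝ)..m₂, (η₂ * s (x - τ) + c)) = (∫ x in m₂..T, (η₂ * s (x - τ) + c)) →
        m₂ ≤ m₁)
    ∧ (0 < c → ∀ ε : ℝ, 0 < ε → ∃ η₀ > (0 : ℝ), ∀ η : ℝ, 0 < η → η < η₀ →
        ∀ m ∈ Set.Icc (0 : ℝ) T,
        (∫ x in (0 : ℝ)..m, (η * s (x - τ) + c)) = (∫ x in m..T, (η * s (x - τ) + c)) →
        |m - T / 2| < ε) :=
  median_bias_ambient_light_general T τ c s hτT hc hsnn hsint hsym hmono hsupp hmass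
end
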